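/- arXiv:2502.18033 — 6 statements merged into one kernel-verified Lean document; each statement's English description precedes it below -/
import Mathlib

section
/- Let ι be a nonempty finite type. For each α ∈ ι let A_α ⊆ ℕ satisfy: (i) ⋃_{α} A_α = ℕ; (ii) the complement ℕ ∖ A_α is nonempty; (iii) 0 ∈ A_α. Let c : ι → ℤ. For i ∈ ℕ define rank_α(i) = #{j ∈ A_α : j ≤ i} (a finite natural number), and define d(i) = max { c_α + rank_α(i) : α ∈ ι with i ∈ A_α } (the maximum over the nonempty finite set of indices α whose set contains i). Then it is NOT the case that d(i) = d(0) + i for every i ∈ ℕ. -/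
open Set

/-- Combinatorial core of the non-intrinsic-extremality of convex combinations:
given finitely many subsets `A α ⊆ ℕ` covering `ℕ`, each containing `0` and having
nonempty complement, offsets `c α`, ranks `rank α i = #{j ∈ A α : j ≤ i}`, and the
upper envelope `d i = max {c α + rank α i : i ∈ A α}`, it cannot happen that
`d i = d 0 + i` for all `i`. -/
theorem envelope_not_linear {ι : Type*} [Fintype ι] [Nonempty ι]
    (A : ι → Set ℕ)
    (hU : (⋃ α, A α) = Set.univ)
    (hcompl : ∀ α, ((A α)ᶜ : Set ℕ).Nonempty)
    (h0 : ∀ α, 0 ∈ A α)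
    (c : ι → ℤ)
    (rank : ι → ℕ → ℕ)
    (hrank : ∀ α i, rank α i = {j | j ∈ A α ∧ j ≤ i}.ncard)
    (d : ℕ → ℤ)
    (hd : ∀ i : ℕ, IsGreatest {x : ℤ | ∃ α, i ∈ A α ∧ x = c α + (rank α i : ℤ)} (d i)) :
    ¬ (∀ i : ℕ, d i = d 0 + (i : ℤ)) := by

  intro hlin
  -- every α has d 0 ≥ c α + 1
  have hrank0 : ∀ α, rank α 0 = 1 := by
    intro α
    rw [hrank]
    have : {j | j ∈ A α ∧ j ≤ 0} = {0} := by
      ext j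
      simp only [Set.mem_setOf_eq, Set.mem_singleton_iff, Nat.le_zero]
      constructor
      · rintro ⟨_, rfl⟩; rfl
      · rintro rfl; exact ⟨h0 α, rfl⟩
    rw [this, Set.ncard_singleton]
  have hd0 : ∀ α, c α + 1 ≤ d 0 := by
    intro α
    have := (hd 0).2 ⟨α, h0 α, rfl⟩
    rwa [hrank0 α] at this
  -- for every i there is α whose set contains Iic i
  have key : ∀ i : ℕ, ∃ α, Set.Iic i ⊆ A α := by
    intro i
    obtain ⟨α, hiA, hx⟩ := (hd i).1
    refine ⟨α, ?_⟩
    have hri : (i : ℤ) + 1 ≤ (rank α i : ℤ) := by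
      have h1 : c α + (rank α i : ℤ) = d 0 + i := by rw [← hx, hlin i]
      have := hd0 α
      linarith
    have hri' : i + 1 ≤ rank α i := by exact_mod_cast hri
    have hsub : {j | j ∈ A α ∧ j ≤ i} ⊆ Set.Iic i := fun j hj => hj.2
    have hIic : (Set.Iic i).ncard = i + 1 := by
      rw [← Finset.coe_Iic, Set.ncard_coe_finset, Nat.card_Iic]
    have hfin : (Set.Iic i).Finite := Set.finite_Iic i
    have heq : {j | j ∈ A α ∧ j ≤ i} = Set.Iic i := by
      apply Set.eq_of_subset_of_ncard_le hsub _ hfin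
      rw [hIic, ← hrank α i]; exact hri'
    intro j hj
    have : j ∈ {j | j ∈ A α ∧ j ≤ i} := heq ▸ hj
    exact this.1
  -- pick missing element for each α and take max
  choose m hm using hcompl
  set M := Finset.univ.sup m with hM
  obtain ⟨α, hα⟩ := key M
  exact hm α (hα (Set.mem_Iic.mpr (Finset.le_sup (Finset.mem_univ α))))
end

section
/- Let x : ℕ → ℝ satisfy 0 < x_n for all n, x_n → +∞ as n → ∞, and suppose the function n ↦ 1/x_n is NOT summable. Let a, b, c ∈ ℝ satisfy a < x_n, b < x_n and c < x_n for all n. If there exists a real number L such that the partial sums Σ_{n < N} [ 2·log(1 − b/x_n) − log(1 − a/x_n) − log(1 − c/x_n) ] converge to L as N → ∞, then a + c = 2b. -/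
open Filter Topology Real

/-- Auxiliary: if `f n * x n → k > 0` with `x n > 0` and `∑ 1/x n` diverges, then the partial
sums of `f` cannot converge. -/
lemma aux_no_converge (x : ℕ → ℝ) (hpos : ∀ n, 0 < x n)
    (hns : ¬ Summable (fun n => 1 / x n)) (f : ℕ → ℝ) (k : ℝ) (hk : 0 < k)
    (hlim : Tendsto (fun n => f n * x n) atTop (𝓝 k)) (L : ℝ)
    (hL : Tendsto (fun N => ∑ n ∈ Finset.range N, f n) atTop (𝓝 L)) : False := by
  have hnonneg : ∀ n, 0 ≤ 1 / x n := fun n => (one_div_nonneg.2 (hpos n).le)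
  have hdiv : Tendsto (fun N => ∑ n ∈ Finset.range N, 1 / x n) atTop atTop :=
    (not_summable_iff_tendsto_nat_atTop_of_nonneg hnonneg).1 hns
  -- eventually f n ≥ (k/2) / x n
  have hev : ∀ᶠ n in atTop, k / 2 * (1 / x n) ≤ f n := by
    have h1 : ∀ᶠ n in atTop, k / 2 < f n * x n :=
      hlim.eventually (eventually_gt_nhds (by linarith))
    filter_upwards [h1] with n hn
    have hx := hpos n
    rw [mul_one_div, div_le_iff₀ hx]
    linarith
  obtain ⟨N₀, hN₀⟩ := eventually_atTop.1 hev
  set C : ℝ := ∑ n ∈ Finset.range N₀, (f n - k / 2 * (1 / x n)) with hC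
  have key : ∀ N, N₀ ≤ N →
      C + k / 2 * ∑ n ∈ Finset.range N, 1 / x n ≤ ∑ n ∈ Finset.range N, f n := by
    intro N hN
    have hsub : Finset.range N₀ ⊆ Finset.range N := Finset.range_subset_range.2 hN
    have h2 : C ≤ ∑ n ∈ Finset.range N, (f n - k / 2 * (1 / x n)) := by
      apply Finset.sum_le_sum_of_subset_of_nonneg hsub
      intro i hi hni
      have : N₀ ≤ i := by
        by_contra h
        exact hni (Finset.mem_range.2 (not_le.1 h))
      linarith [hN₀ i this]
    have h3 : ∑ n ∈ Finset.range N, (f n - k / 2 * (1 / x n)) =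
        ∑ n ∈ Finset.range N, f n - k / 2 * ∑ n ∈ Finset.range N, 1 / x n := by
      rw [Finset.sum_sub_distrib, Finset.mul_sum]
    linarith [h2.trans_eq h3]
  have hdiv2 : Tendsto (fun N => C + k / 2 * ∑ n ∈ Finset.range N, 1 / x n) atTop atTop :=
    tendsto_atTop_add_const_left atTop C (hdiv.const_mul_atTop (by linarith : (0:ℝ) < k / 2))
  have hdiv3 : Tendsto (fun N => ∑ n ∈ Finset.range N, f n) atTop atTop := by
    apply tendsto_atTop_mono' atTop _ hdiv2
    filter_upwards [eventually_ge_atTop N₀] with N hN using key N hN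
  exact not_tendsto_nhds_of_tendsto_atTop hdiv3 L hL

/-- If `0 < x n`, `x n → ∞`, `∑ 1 / x n` diverges, `a, b, c < x n` for all `n`, and the
partial sums of `2 log(1 - b/x n) - log(1 - a/x n) - log(1 - c/x n)` converge, then
`a + c = 2 b`. -/
theorem equidistant_of_log_sum_converges (x : ℕ → ℝ)
    (hpos : ∀ n, 0 < x n)
    (hx : Tendsto x atTop atTop)
    (hns : ¬ Summable (fun n => 1 / x n))
    (a b c : ℝ)
    (ha : ∀ n, a < x n) (hb : ∀ n, b < x n) (hc : ∀ n, c < x n)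
    (hL : ∃ L : ℝ, Tendsto
      (fun N => ∑ n ∈ Finset.range N,
        (2 * Real.log (1 - b / x n) - Real.log (1 - a / x n) - Real.log (1 - c / x n)))
      atTop (𝓝 L)) :
    a + c = 2 * b := by
  obtain ⟨L, hL⟩ := hL
  set f : ℕ → ℝ := fun n =>
    2 * Real.log (1 - b / x n) - Real.log (1 - a / x n) - Real.log (1 - c / x n) with hf
  set F : ℝ → ℝ := fun t =>
    2 * Real.log (1 - b * t) - Real.log (1 - a * t) - Real.log (1 - c * t) with hF
  set k : ℝ := a + c - 2 * b with hk
  -- F has derivative k at 0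
  have hderiv : HasDerivAt F k 0 := by
    have hlog : ∀ d : ℝ, HasDerivAt (fun t => Real.log (1 - d * t)) (-d) 0 := by
      intro d
      have h1 : HasDerivAt (fun t : ℝ => 1 - d * t) (-d) 0 := by
        simpa using ((hasDerivAt_id (0:ℝ)).const_mul d).const_sub 1
      have h2 : HasDerivAt Real.log ((1:ℝ)⁻¹) (1 - d * 0) := by
        simpa using Real.hasDerivAt_log (by norm_num : (1 - d * 0 : ℝ) ≠ 0)
      simpa [Function.comp_def] using h2.comp 0 h1
    have := (((hlog b).const_mul 2).sub (hlog a)).sub (hlog c)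
    exact this.congr_deriv (by rw [hk]; ring)
  have hF0 : F 0 = 0 := by simp [hF]
  -- f n * x n → k
  have hinv : Tendsto (fun n => 1 / x n) atTop (𝓝[≠] (0:ℝ)) := by
    apply tendsto_nhdsWithin_of_tendsto_nhds_of_eventually_within
    · simpa [one_div, Pi.inv_def] using hx.inv_tendsto_atTop
    · filter_upwards with n
      exact (one_div_pos.2 (hpos n)).ne'
  have hslope : Tendsto (slope F 0) (𝓝[≠] (0:ℝ)) (𝓝 k) :=
    hasDerivAt_iff_tendsto_slope.1 hderiv
  have hfx : Tendsto (fun n => f n * x n) atTop (𝓝 k) := by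
    have := hslope.comp hinv
    have heq : (fun n => slope F 0 (1 / x n)) = fun n => f n * x n := by
      funext n
      have hxne : x n ≠ 0 := (hpos n).ne'
      have hfn : f n = F (1 / x n) := by
        simp only [hf, hF, one_div, div_eq_mul_inv, one_mul]
      rw [slope_def_field, hF0, hfn]
      field_simp
      simp
    rwa [Function.comp_def, heq] at this
  -- Now rule out k ≠ 0
  rcases lt_trichotomy k 0 with hk0 | hk0 | hk0
  · exfalso
    apply aux_no_converge x hpos hns (fun n => -f n) (-k) (by linarith) _ (-L)
    · simpa [Finset.sum_neg_distrib] using hL.neg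
    · simpa [neg_mul] using hfx.neg
  · linarith [hk0.symm ▸ hk]
  · exact absurd hL (fun h => aux_no_converge x hpos hns f k hk0 hfx L h)
end

section
/- Let c, y : ℕ → ℝ satisfy c_i ≠ 0 for all i ≥ 1 and y_1 ≠ 0, and suppose that y_i · (c_j)^i = y_j · (c_i)^j for all i, j ≥ 1 (natural-number powers). Then c_j = c_1 · (c_2/c_1)^{j−1} for all j ≥ 1; in particular c is a geometric progression. -/
/-- Algebraic core of the accumulation-point theorem: if `c i ≠ 0` for `i ≥ 1`,
`y 1 ≠ 0`, and `y i * (c j)^i = y j * (c i)^j` for all `i, j ≥ 1`, then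
`c` is the geometric progression `c j = c 1 * (c 2 / c 1)^(j-1)` for `j ≥ 1`. -/
theorem geometric_of_crossing_relation (c y : ℕ → ℝ)
    (hc : ∀ i, 1 ≤ i → c i ≠ 0)
    (hy : y 1 ≠ 0)
    (h : ∀ i j, 1 ≤ i → 1 ≤ j → y i * (c j) ^ i = y j * (c i) ^ j) :
    ∀ j, 1 ≤ j → c j = c 1 * (c 2 / c 1) ^ (j - 1) := by
  have hc1 := hc 1 le_rfl
  have hc2 := hc 2 (by norm_num)
  intro j hj
  match j, hj with
  | 1, _ => simp
  | (k+2), _ =>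
    have hcj := hc (k+2) (by omega)
    have e1 := h 1 (k+2) le_rfl (by omega)
    have e2 := h 2 (k+2) (by norm_num) (by omega)
    have e12 := h 1 2 le_rfl (by norm_num)
    simp only [pow_one] at e1 e12
    -- y (k+2) in terms of y 1
    have hyj : y (k+2) = y 1 * c (k+2) / c 1 ^ (k+2) := by
      field_simp
      linarith [e1]
    have hy2 : y 2 = y 1 * c 2 / c 1 ^ 2 := by
      field_simp
      linarith [e12]
    rw [hyj, hy2] at e2
    have hc1p : (c 1 : ℝ) ^ (k+2) ≠ 0 := pow_ne_zero _ hc1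
    field_simp at e2
    -- goal : c (k+2) = c 1 * (c 2 / c 1) ^ (k + 2 - 1)
    show c (k+2) = c 1 * (c 2 / c 1) ^ (k + 1)
    rw [div_pow]
    field_simp
    have hne : y 1 * c 2 * c (k+2) * c 1 ^ 2 ≠ 0 := by
      simp [hy, hc1, hc2, hcj]
    apply mul_left_cancel₀ hne
    linear_combination y 1 * c (k+2) * c 1 * e2
end

section
/- Let m : ℕ → ℝ be strictly increasing with 0 < m_0 and m_n → +∞ as n → ∞, and let α : ℕ → ℝ satisfy m_n ≤ α_n ≤ m_{n+1} for all n. Then for every real s < 0: every term log((1 − s/α_n)/(1 − s/m_n)) is ≤ 0, the function n ↦ log((1 − s/α_n)/(1 − s/m_n)) is summable, and its sum L(s) satisfies −log(1 − s/m_0) ≤ L(s) ≤ 0. -/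
open Filter Topology Real

/-- Regge-trajectory bound: for a strictly increasing positive spectrum `m n → ∞`
with interlacing zeros `m n ≤ α n ≤ m (n+1)`, and any `s < 0`, each term
`log((1 - s/α n)/(1 - s/m n))` is nonpositive, the family is summable, and its sum
lies between `-log(1 - s / m 0)` and `0`. -/
theorem interlacing_log_sum_bounds (m α : ℕ → ℝ)
    (hmono : StrictMono m) (hpos : 0 < m 0)
    (htop : Tendsto m atTop atTop)
    (hα : ∀ n, m n ≤ α n ∧ α n ≤ m (n + 1)) :
    ∀ s : ℝ, s < 0 →
      (∀ n, Real.log ((1 - s / α n) / (1 - s / m n)) ≤ 0) ∧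
      Summable (fun n => Real.log ((1 - s / α n) / (1 - s / m n))) ∧
      - Real.log (1 - s / m 0) ≤ ∑' n, Real.log ((1 - s / α n) / (1 - s / m n)) ∧
      ∑' n, Real.log ((1 - s / α n) / (1 - s / m n)) ≤ 0 := by
  intro s hs
  have hm : ∀ n, 0 < m n := fun n => lt_of_lt_of_le hpos (hmono.monotone (Nat.zero_le n))
  have hαpos : ∀ n, 0 < α n := fun n => lt_of_lt_of_le (hm n) (hα n).1
  have hBm : ∀ n, (1:ℝ) ≤ 1 - s / m n := by
    intro n
    have : s / m n < 0 := div_neg_of_neg_of_pos hs (hm n)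
    linarith
  have hBα : ∀ n, (1:ℝ) ≤ 1 - s / α n := by
    intro n
    have : s / α n < 0 := div_neg_of_neg_of_pos hs (hαpos n)
    linarith
  -- s/m n ≤ s/α n since s < 0, 0 < m n ≤ α n
  have hdiv1 : ∀ n, s / m n ≤ s / α n := by
    intro n
    rw [div_le_div_iff₀ (hm n) (hαpos n)]
    nlinarith [(hα n).1, hm n]
  -- s/α n ≤ s/m (n+1)
  have hdiv2 : ∀ n, s / α n ≤ s / m (n + 1) := by
    intro n
    rw [div_le_div_iff₀ (hαpos n) (hm (n + 1))]
    nlinarith [(hα n).2, hαpos n]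
  set f : ℕ → ℝ := fun n => Real.log (1 - s / m n) with hf
  set T : ℕ → ℝ := fun n => Real.log ((1 - s / α n) / (1 - s / m n)) with hT
  have hTeq : ∀ n, T n = Real.log (1 - s / α n) - f n := by
    intro n
    exact Real.log_div (by linarith [hBα n]) (by linarith [hBm n])
  have hfnonneg : ∀ n, 0 ≤ f n := fun n => Real.log_nonneg (hBm n)
  -- each term nonpositive
  have hTnonpos : ∀ n, T n ≤ 0 := by
    intro n
    rw [hTeq n]
    have := Real.log_le_log (show (0:ℝ) < 1 - s / α n by linarith [hBα n]) (show (1:ℝ) - s / α n ≤ 1 - s / m n by linarith [hdiv1 n])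
    linarith
  -- lower bound: T n ≥ f (n+1) - f n
  have hTlow : ∀ n, f (n + 1) - f n ≤ T n := by
    intro n
    rw [hTeq n]
    have := Real.log_le_log (show (0:ℝ) < 1 - s / m (n+1) by linarith [hBm (n+1)]) (show (1:ℝ) - s / m (n+1) ≤ 1 - s / α n by linarith [hdiv2 n])
    linarith
  -- partial sums of -T bounded by f 0
  have hpartial : ∀ N, ∑ i ∈ Finset.range N, (-T i) ≤ f 0 := by
    intro N
    have h1 : ∑ i ∈ Finset.range N, (-T i) ≤ ∑ i ∈ Finset.range N, (f i - f (i + 1)) := by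
      apply Finset.sum_le_sum
      intro i _
      have := hTlow i
      linarith
    have h2 : ∑ i ∈ Finset.range N, (f i - f (i + 1)) = f 0 - f N :=
      Finset.sum_range_sub' f N
    have := hfnonneg N
    linarith
  have hnegnonneg : ∀ n, 0 ≤ -T n := fun n => by linarith [hTnonpos n]
  have hsumneg : Summable (fun n => -T n) :=
    summable_of_sum_range_le hnegnonneg hpartial
  have hsum : Summable T := by
    have := hsumneg.neg
    simpa using this
  refine ⟨hTnonpos, hsum, ?_, ?_⟩
  · have hle : ∑' n, (-T n) ≤ f 0 := Real.tsum_le_of_sum_range_le hnegnonneg hpartial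
    have hneg : ∑' n, (-T n) = -∑' n, T n := tsum_neg
    linarith
  · exact tsum_nonpos hTnonpos
end

section
/- Let m : ℕ → ℝ be strictly increasing with 0 < m_0 and m_n → +∞ as n → ∞, and let α : ℕ → ℝ satisfy m_n ≤ α_n ≤ m_{n+1} for all n. Then for every ε > 0 there exists S < 0 such that for all s ≤ S: −(1 + ε)·log(−s) ≤ Σ'_{n} log((1 − s/α_n)/(1 − s/m_n)) ≤ 0, where Σ' denotes the sum of the (summable) family. -/
open Filter Topology Real

private lemma div_le_div_of_neg_num {s a b : ℝ} (hs : s < 0) (ha : 0 < a) (hab : a ≤ b) :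
    s / a ≤ s / b := by
  rw [div_le_div_iff₀ ha (lt_of_lt_of_le ha hab)]
  exact mul_le_mul_of_nonpos_left hab hs.le

/-- Quantitative Regge bound: for a strictly increasing positive spectrum `m n → ∞`
with interlacing zeros `m n ≤ α n ≤ m (n+1)`, for every `ε > 0` there is `S < 0`
such that for all `s ≤ S` the sum `∑' n, log((1 - s/α n)/(1 - s/m n))` lies between
`-(1 + ε) log(-s)` and `0`. -/
theorem regge_correction_bound (m α : ℕ → ℝ)
    (hmono : StrictMono m) (hpos : 0 < m 0)
    (htop : Tendsto m atTop atTop)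
    (hα : ∀ n, m n ≤ α n ∧ α n ≤ m (n + 1)) :
    ∀ ε : ℝ, 0 < ε → ∃ S : ℝ, S < 0 ∧ ∀ s : ℝ, s ≤ S →
      (-(1 + ε) * Real.log (-s) ≤ ∑' n, Real.log ((1 - s / α n) / (1 - s / m n)) ∧
        ∑' n, Real.log ((1 - s / α n) / (1 - s / m n)) ≤ 0) := by
  intro ε hε
  have hmpos : ∀ n, 0 < m n := fun n => lt_of_lt_of_le hpos (hmono.monotone (Nat.zero_le n))
  have hαpos : ∀ n, 0 < α n := fun n => lt_of_lt_of_le (hmpos n) (hα n).1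
  set c : ℝ := 1 + 1 / m 0 with hc
  have hc1 : (1:ℝ) ≤ c := by
    have : 0 ≤ 1 / m 0 := by positivity
    simp [hc]; linarith
  have hcpos : 0 < c := by linarith
  refine ⟨-(max 1 (c ^ (1/ε))), by
    have : (0:ℝ) < max 1 (c ^ (1/ε)) := lt_of_lt_of_le one_pos (le_max_left _ _)
    linarith, ?_⟩
  intro s hs
  have hx : max 1 (c ^ (1/ε)) ≤ -s := by linarith
  have hx1 : (1:ℝ) ≤ -s := le_trans (le_max_left _ _) hx
  have hs0 : s < 0 := by linarith
  have hxpos : (0:ℝ) < -s := by linarith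
  -- basic per-n facts
  have h1m : ∀ n, (1:ℝ) ≤ 1 - s / m n := by
    intro n
    have : s / m n < 0 := div_neg_of_neg_of_pos hs0 (hmpos n)
    linarith
  have h1α : ∀ n, (1:ℝ) ≤ 1 - s / α n := by
    intro n
    have : s / α n < 0 := div_neg_of_neg_of_pos hs0 (hαpos n)
    linarith
  set f : ℕ → ℝ := fun n => Real.log (1 - s / m n) with hf
  have hfnonneg : ∀ n, 0 ≤ f n := fun n => Real.log_nonneg (h1m n)
  set t : ℕ → ℝ := fun n => Real.log ((1 - s / α n) / (1 - s / m n)) with ht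
  have htdiff : ∀ n, t n = Real.log (1 - s / α n) - f n := by
    intro n
    simp only [ht, hf]
    rw [Real.log_div (by linarith [h1α n]) (by linarith [h1m n])]
  -- each term is nonpositive
  have htle : ∀ n, t n ≤ 0 := by
    intro n
    rw [htdiff n]
    have h1 : 1 - s / α n ≤ 1 - s / m n := by
      have := div_le_div_of_neg_num hs0 (hmpos n) (hα n).1
      linarith
    have := Real.log_le_log (by linarith [h1α n]) h1
    linarith
  -- each term dominates the telescoping difference
  have htge : ∀ n, f (n+1) - f n ≤ t n := by
    intro n
    rw [htdiff n]
    have h1 : 1 - s / m (n+1) ≤ 1 - s / α n := by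
      have := div_le_div_of_neg_num hs0 (hαpos n) (hα n).2
      linarith
    have := Real.log_le_log (by linarith [h1m (n+1)]) h1
    linarith
  set g : ℕ → ℝ := fun n => f n - f (n+1) with hg
  have hgnonneg : ∀ n, 0 ≤ g n := by
    intro n
    have := htge n
    have := htle n
    simp only [hg]; linarith
  have hgsum : Summable g := by
    apply summable_of_sum_range_le (c := f 0) hgnonneg
    intro N
    rw [Finset.sum_range_sub' f N]
    linarith [hfnonneg N]
  have hgts : ∑' n, g n ≤ f 0 := by
    apply Summable.tsum_le_of_sum_range_le hgsum
    intro N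
    rw [Finset.sum_range_sub' f N]
    linarith [hfnonneg N]
  have hnt : Summable (fun n => -t n) := by
    apply Summable.of_nonneg_of_le (fun n => by linarith [htle n])
      (fun n => by have := htge n; simp only [hg]; linarith) hgsum
  have htsum : Summable t := by
    have := hnt.neg
    simpa using this
  have hts_le : ∑' n, (-t n) ≤ f 0 :=
    le_trans (Summable.tsum_le_tsum (fun n => by have := htge n; simp only [hg]; linarith) hnt hgsum) hgts
  -- bound f 0 ≤ (1+ε) log (-s)
  have hcε : c ≤ (-s) ^ ε := by
    have h1 : c ^ (1/ε) ≤ -s := le_trans (le_max_right _ _) hx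
    have h2 : (c ^ (1/ε)) ^ ε ≤ (-s) ^ ε :=
      Real.rpow_le_rpow (Real.rpow_nonneg hcpos.le _) h1 hε.le
    rwa [← Real.rpow_mul hcpos.le, one_div_mul_cancel hε.ne', Real.rpow_one] at h2
  have hf0 : f 0 ≤ (1 + ε) * Real.log (-s) := by
    have h2 : 1 - s / m 0 ≤ (-s) * c := by
      have h2a : 1 - s / m 0 = 1 + (-s) * (1 / m 0) := by ring
      have h2b : (-s) * c = -s + (-s) * (1 / m 0) := by simp [hc]; ring
      rw [h2a, h2b]
      linarith
    have h4 : (-s) * c ≤ (-s) ^ (1 + ε) := by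
      rw [Real.rpow_add hxpos, Real.rpow_one]
      exact mul_le_mul_of_nonneg_left hcε hxpos.le
    have h5 : f 0 ≤ Real.log ((-s) ^ (1 + ε)) :=
      Real.log_le_log (by linarith [h1m 0]) (le_trans h2 h4)
    rwa [Real.log_rpow hxpos] at h5
  constructor
  · have h6 : ∑' n, (-t n) ≤ (1 + ε) * Real.log (-s) := le_trans hts_le hf0
    rw [tsum_neg] at h6
    simp only [ht] at h6 ⊢
    linarith
  · exact tsum_nonpos htle
end

section
/- Let n ∈ ℕ and let t ∈ ℂ be such that there is no m ∈ ℕ with t = (m : ℂ) − 1. Then, as s → (n : ℂ) − 1 through values s ≠ n − 1, the function s ↦ (s − (n − 1)) · Γ(−1−s)·Γ(−1−t)/Γ(−2−s−t) tends to −(1/n!) · ∏_{j < n} (t + j + 2), where Γ denotes the complex Gamma function. -/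
open Filter Topology

private lemma gamma_add_nat (z : ℂ) (n : ℕ) (h : ∀ j < n, z + (j : ℂ) ≠ 0) :
    Complex.Gamma (z + n) = Complex.Gamma z * ∏ j ∈ Finset.range n, (z + (j : ℂ)) := by
  induction n with
  | zero => simp
  | succ k ih =>
    have hz : z + (k : ℂ) ≠ 0 := h k (Nat.lt_succ_self k)
    have hcast : z + ((k + 1 : ℕ) : ℂ) = (z + k) + 1 := by push_cast; ring
    rw [hcast, Complex.Gamma_add_one _ hz,
      ih (fun j hj => h j (hj.trans (Nat.lt_succ_self k))), Finset.prod_range_succ]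
    ring

private lemma neg_prod (n : ℕ) (f : ℕ → ℂ) :
    ∏ j ∈ Finset.range n, -f j = (-1 : ℂ) ^ n * ∏ j ∈ Finset.range n, f j := by
  induction n with
  | zero => simp
  | succ k ih =>
    rw [Finset.prod_range_succ, Finset.prod_range_succ, ih, pow_succ]
    ring

private lemma prod_aux (n : ℕ) :
    ∏ j ∈ Finset.range n, (-1 - ((n : ℂ) - 1) + (j : ℂ)) =
      (-1 : ℂ) ^ n * (n.factorial : ℂ) := by
  rw [← Finset.prod_range_reflect (fun j => -1 - ((n : ℂ) - 1) + (j : ℂ)) n]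
  have : ∀ j ∈ Finset.range n,
      -1 - ((n : ℂ) - 1) + ((n - 1 - j : ℕ) : ℂ) = -(((j : ℂ)) + 1) := by
    intro j hj
    have hj' := Finset.mem_range.mp hj
    rw [Nat.cast_sub (by omega), Nat.cast_sub (by omega)]
    push_cast
    ring
  rw [Finset.prod_congr rfl this, neg_prod]
  congr 1
  rw [← Finset.prod_range_add_one_eq_factorial n]
  push_cast
  rfl

private lemma key (n : ℕ) (t : ℂ) (ht : ¬ ∃ m : ℕ, t = (m : ℂ) - 1) :
    Complex.Gamma (-1 - t) * (Complex.Gamma (-1 - (n : ℂ) - t))⁻¹ =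
      (-1 : ℂ) ^ n * ∏ j ∈ Finset.range n, (t + (j : ℂ) + 2) := by
  by_cases h0 : Complex.Gamma (-1 - (n : ℂ) - t) = 0
  · obtain ⟨m, hm⟩ := (Complex.Gamma_eq_zero_iff _).mp h0
    have ht' : t = (m : ℂ) - (n : ℂ) - 1 := by linear_combination -hm
    have hmn : m < n := by
      by_contra hge
      push_neg at hge
      exact ht ⟨m - n, by rw [Nat.cast_sub hge, ht']⟩
    have hfac : t + ((n - 1 - m : ℕ) : ℂ) + 2 = 0 := by
      rw [ht', Nat.cast_sub (by omega), Nat.cast_sub (by omega)]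
      push_cast
      ring
    have hprod : ∏ j ∈ Finset.range n, (t + (j : ℂ) + 2) = 0 :=
      Finset.prod_eq_zero (Finset.mem_range.mpr (by omega : n - 1 - m < n)) hfac
    rw [h0, inv_zero, mul_zero, hprod, mul_zero]
  · set z : ℂ := -1 - (n : ℂ) - t with hz
    have hzne : ∀ m : ℕ, z ≠ -m := fun m hzm =>
      h0 ((Complex.Gamma_eq_zero_iff z).mpr ⟨m, hzm⟩)
    have hzj : ∀ j < n, z + (j : ℂ) ≠ 0 := fun j _ hj =>
      hzne j (by linear_combination hj)
    have hG := gamma_add_nat z n hzj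
    have hzn : z + (n : ℂ) = -1 - t := by rw [hz]; ring
    rw [hzn] at hG
    rw [hG, mul_comm (Complex.Gamma z), mul_assoc, mul_inv_cancel₀ h0, mul_one]
    rw [← Finset.prod_range_reflect (fun j => z + (j : ℂ)) n]
    have : ∀ j ∈ Finset.range n,
        z + ((n - 1 - j : ℕ) : ℂ) = -(t + (j : ℂ) + 2) := by
      intro j hj
      have hj' := Finset.mem_range.mp hj
      rw [hz, Nat.cast_sub (by omega), Nat.cast_sub (by omega)]
      push_cast
      ring
    rw [Finset.prod_congr rfl this, neg_prod]

/-- Residue of the Veneziano amplitude at its `n`-th `s`-pole: as `s → n - 1` with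
`s ≠ n - 1`, the function `(s - (n - 1)) Γ(-1-s)Γ(-1-t)/Γ(-2-s-t)` tends to
`-(1/n!) ∏_{j < n} (t + j + 2)`. -/
theorem veneziano_residue (n : ℕ) (t : ℂ)
    (ht : ¬ ∃ m : ℕ, t = (m : ℂ) - 1) :
    Tendsto
      (fun s : ℂ => (s - ((n : ℂ) - 1)) *
        (Complex.Gamma (-1 - s) * Complex.Gamma (-1 - t) / Complex.Gamma (-2 - s - t)))
      (𝓝[≠] ((n : ℂ) - 1))
      (𝓝 (-(1 / (n.factorial : ℂ)) * ∏ j ∈ Finset.range n, (t + (j : ℂ) + 2))) := by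
  set a : ℂ := (n : ℂ) - 1 with ha
  set g : ℂ → ℂ := fun s =>
    -(Complex.Gamma ((n : ℂ) - s) / ∏ j ∈ Finset.range n, (-1 - s + (j : ℂ))) *
      (Complex.Gamma (-1 - t) * (Complex.Gamma (-2 - s - t))⁻¹) with hg
  have hC : ∏ j ∈ Finset.range n, (-1 - a + (j : ℂ)) = (-1 : ℂ) ^ n * (n.factorial : ℂ) :=
    prod_aux n
  have hCne : ∏ j ∈ Finset.range n, (-1 - a + (j : ℂ)) ≠ 0 := by
    rw [hC]
    exact mul_ne_zero (pow_ne_zero _ (neg_ne_zero.mpr one_ne_zero))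
      (Nat.cast_ne_zero.mpr n.factorial_ne_zero)
  -- Step 1: eventual equality
  have hA : ∀ᶠ s in 𝓝 a, ∀ j ∈ Finset.range n, -1 - s + (j : ℂ) ≠ 0 := by
    rw [Filter.eventually_all_finset]
    intro j hj
    have hja : -1 - a + (j : ℂ) ≠ 0 := by
      intro h
      have hjn : (j : ℂ) = (n : ℂ) := by rw [ha] at h; linear_combination h
      exact (Finset.mem_range.mp hj).ne (Nat.cast_injective hjn)
    exact (((continuous_const.sub continuous_id).add
      continuous_const).continuousAt (x := a)).eventually_ne hja
  have hEq : (fun s : ℂ => (s - ((n : ℂ) - 1)) *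
      (Complex.Gamma (-1 - s) * Complex.Gamma (-1 - t) / Complex.Gamma (-2 - s - t)))
      =ᶠ[𝓝[≠] a] g := by
    filter_upwards [hA.filter_mono nhdsWithin_le_nhds, self_mem_nhdsWithin] with s hs hsa
    have hP : ∏ j ∈ Finset.range n, (-1 - s + (j : ℂ)) ≠ 0 :=
      Finset.prod_ne_zero_iff.mpr hs
    have hne : -1 - s + (n : ℂ) ≠ 0 := by
      intro h
      exact hsa (by rw [Set.mem_singleton_iff, ha]; linear_combination -h)
    have hGam : Complex.Gamma ((n : ℂ) - s) =
        Complex.Gamma (-1 - s) *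
          ((∏ j ∈ Finset.range n, (-1 - s + (j : ℂ))) * (-1 - s + (n : ℂ))) := by
      have hall : ∀ j < n + 1, (-1 - s) + (j : ℂ) ≠ 0 := by
        intro j hj
        rcases Nat.lt_succ_iff_lt_or_eq.mp hj with hj' | rfl
        · exact hs j (Finset.mem_range.mpr hj')
        · exact hne
      have := gamma_add_nat (-1 - s) (n + 1) hall
      rw [Finset.prod_range_succ] at this
      rw [← this]
      congr 1
      push_cast
      ring
    rw [hg]
    simp only
    have hkey : -(Complex.Gamma ((n : ℂ) - s) / ∏ j ∈ Finset.range n, (-1 - s + (j : ℂ))) =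
        (s - ((n : ℂ) - 1)) * Complex.Gamma (-1 - s) := by
      rw [hGam, show Complex.Gamma (-1 - s) *
            ((∏ j ∈ Finset.range n, (-1 - s + (j : ℂ))) * (-1 - s + (n : ℂ))) =
          (Complex.Gamma (-1 - s) * (-1 - s + (n : ℂ))) *
            ∏ j ∈ Finset.range n, (-1 - s + (j : ℂ)) from by ring,
        mul_div_assoc, div_self hP, mul_one]
      ring
    rw [hkey, div_eq_mul_inv]
    ring
  -- Step 2: limit of g
  have h1 : Tendsto (fun s : ℂ => Complex.Gamma ((n : ℂ) - s)) (𝓝[≠] a) (𝓝 1) := by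
    have hc : ContinuousAt Complex.Gamma 1 :=
      (Complex.differentiableAt_Gamma 1 (fun m => by
        intro h
        have : (1 : ℝ) = -(m : ℝ) := by exact_mod_cast congrArg Complex.re h
        nlinarith [Nat.cast_nonneg (α := ℝ) m])).continuousAt
    have hsub : Tendsto (fun s : ℂ => (n : ℂ) - s) (𝓝[≠] a) (𝓝 1) := by
      have : Tendsto (fun s : ℂ => (n : ℂ) - s) (𝓝 a) (𝓝 ((n : ℂ) - a)) :=
        (continuous_const.sub continuous_id).tendsto a
      rw [show (n : ℂ) - a = 1 by rw [ha]; ring] at this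
      exact this.mono_left nhdsWithin_le_nhds
    have h1c := hc.tendsto.comp hsub
    rw [Complex.Gamma_one] at h1c
    exact h1c
  have h2 : Tendsto (fun s : ℂ => ∏ j ∈ Finset.range n, (-1 - s + (j : ℂ))) (𝓝[≠] a)
      (𝓝 (∏ j ∈ Finset.range n, (-1 - a + (j : ℂ)))) := by
    have : Continuous fun s : ℂ => ∏ j ∈ Finset.range n, (-1 - s + (j : ℂ)) :=
      continuous_finset_prod _ fun j _ =>
        (continuous_const.sub continuous_id).add continuous_const
    exact (this.tendsto a).mono_left nhdsWithin_le_nhds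
  have h3 : Tendsto (fun s : ℂ => (Complex.Gamma (-2 - s - t))⁻¹) (𝓝[≠] a)
      (𝓝 ((Complex.Gamma (-1 - (n : ℂ) - t))⁻¹)) := by
    have hc : Continuous fun s : ℂ => (Complex.Gamma (-2 - s - t))⁻¹ :=
      Complex.differentiable_one_div_Gamma.continuous.comp
        (((continuous_const.sub continuous_id).sub continuous_const))
    have := (hc.tendsto a).mono_left (nhdsWithin_le_nhds (s := {a}ᶜ))
    rw [show (-2 : ℂ) - a - t = -1 - (n : ℂ) - t by rw [ha]; ring] at this
    exact this
  have hgt : Tendsto g (𝓝[≠] a)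
      (𝓝 (-(1 / (∏ j ∈ Finset.range n, (-1 - a + (j : ℂ)))) *
        (Complex.Gamma (-1 - t) * (Complex.Gamma (-1 - (n : ℂ) - t))⁻¹))) := by
    have := ((h1.div h2 hCne).neg.mul ((tendsto_const_nhds (x := Complex.Gamma (-1 - t))).mul h3))
    simpa [hg, one_div, neg_mul] using this
  have hval : -(1 / (∏ j ∈ Finset.range n, (-1 - a + (j : ℂ)))) *
      (Complex.Gamma (-1 - t) * (Complex.Gamma (-1 - (n : ℂ) - t))⁻¹) =
      -(1 / (n.factorial : ℂ)) * ∏ j ∈ Finset.range n, (t + (j : ℂ) + 2) := by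
    rw [hC, key n t ht]
    have h1' : ((-1 : ℂ)) ^ n ≠ 0 := pow_ne_zero _ (neg_ne_zero.mpr one_ne_zero)
    have h2' : (n.factorial : ℂ) ≠ 0 := Nat.cast_ne_zero.mpr n.factorial_ne_zero
    field_simp
  rw [← hval]
  exact hgt.congr' hEq.symm
end
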